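/- For all n ≥ 0, the number of Fishburn permutations of length n which avoid both 321 and 3124 is |F_n(321, 3124)| = F_{n+2} − n − 1, where F_m denotes the Fibonacci numbers with F_0 = F_1 = 1 and F_m = F_{m−1} + F_{m−2} for m ≥ 2. -/

import Mathlib

/-!
A Fishburn permutation `π ∈ F_n(321, 3124)` with `n ≥ 2` starting with `x ≠ 1` has `π₂ = 1`:
if `x < π₂`, the entry `x - 1` occurs later and gives a copy of `f`; if `x > π₂ ≠ 1`, then
`x π₂ 1` is a `321`. For `x ≥ 3`, the 3124-avoidance (with the entries `x 1`) puts all entries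
above `x` before all entries below `x`, and 321-avoidance makes both blocks increasing (for the
upper block a descent would form a `321` with the entry `2`). So `π` is `1 ⊕ σ` with
`σ ∈ F_{n-1}(321, 3124)`, `21 ⊕ σ` with `σ ∈ F_{n-2}(321, 3124)`, or the rigid permutation
`x 1 (x+1) ⋯ n 2 ⋯ (x-1)` with `3 ≤ x ≤ n`, and conversely all of these lie in the class.
Hence `a_n = a_{n-1} + a_{n-2} + (n - 2)`, which `F_{n+2} - n - 1` solves.
-/

/-- Two lists of naturals have the same length and the same relative order
(including ties). -/
def SameRelOrder (u v : List ℕ) : Prop :=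
  u.length = v.length ∧
    ∀ i j, i < u.length → j < u.length →
      (u.getD i 0 < u.getD j 0 ↔ v.getD i 0 < v.getD j 0)

/-- `α` contains `β` as a pattern: some subsequence of `α` has the same length
and relative order as `β`. -/
def SeqContains (α β : List ℕ) : Prop :=
  ∃ γ : List ℕ, γ.Sublist α ∧ SameRelOrder γ β

/-- A copy of the Fishburn pattern `f` in `l`: indices `j`, `k` with `j + 1 < k`,
`l j = l k + 1` and `l (j+1) > l j`. -/
def HasFishburnCopy (l : List ℕ) : Prop :=
  ∃ j k, j + 1 < k ∧ k < l.length ∧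
    l.getD j 0 = l.getD k 0 + 1 ∧ l.getD j 0 < l.getD (j + 1) 0

/-- A Fishburn permutation contains no copy of the Fishburn pattern `f`. -/
def FishburnFree (l : List ℕ) : Prop := ¬ HasFishburnCopy l

/-- `l` is a permutation of `1, …, n`, written in one-line notation. -/
def IsPermList (n : ℕ) (l : List ℕ) : Prop := l.Perm (List.range' 1 n)

/-- The set of Fishburn permutations of length `n` avoiding each pattern in `pats`. -/
def FishburnSet (n : ℕ) (pats : List (List ℕ)) : Set (List ℕ) :=
  {l | IsPermList n l ∧ FishburnFree l ∧ ∀ p ∈ pats, ¬ SeqContains l p}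

/-- The set of all permutations of length `n` avoiding each pattern in `pats`. -/
def PermSet (n : ℕ) (pats : List (List ℕ)) : Set (List ℕ) :=
  {l | IsPermList n l ∧ ∀ p ∈ pats, ¬ SeqContains l p}

/-- The number of ascents of a sequence. -/
def ascCount (l : List ℕ) : ℕ :=
  ((Finset.range l.length).filter
    (fun i => i + 1 < l.length ∧ l.getD i 0 < l.getD (i + 1) 0)).card

/-- `l` is an ascent sequence. -/
def IsAscentSeq (l : List ℕ) : Prop :=
  (0 < l.length → l.getD 0 0 = 0) ∧
    ∀ j, 0 < j → j < l.length → l.getD j 0 ≤ 1 + ascCount (l.take j)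

/-- The set of ascent sequences of length `n` avoiding each pattern in `pats`. -/
def AscentSeqSet (n : ℕ) (pats : List (List ℕ)) : Set (List ℕ) :=
  {l | l.length = n ∧ IsAscentSeq l ∧ ∀ p ∈ pats, ¬ SeqContains l p}

/-- The Fibonacci numbers, indexed so that `F_0 = F_1 = 1`. -/
def paperFib : ℕ → ℕ
  | 0 => 1
  | 1 => 1
  | m + 2 => paperFib (m + 1) + paperFib m

open List

lemma List.range'_map_add (s n c : ℕ) : (range' s n).map (· + c) = range' (s + c) n := by
  simpa [add_comm] using map_add_range' (a := c) s n 1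

lemma List.map_sub_map_add {c : ℕ} {u : List ℕ} (h : ∀ y ∈ u, c ≤ y) :
    (u.map (· - c)).map (· + c) = u := by
  rw [map_map]
  conv_rhs => rw [← map_id u]
  exact map_congr_left fun y hy => by simp [Nat.sub_add_cancel (h y hy)]

lemma List.eq_filter_append_filter_not_of_pairwise {α : Type*} {p : α → Bool} :
    ∀ {l : List α}, l.Pairwise (fun a b => p b → p a) →
      l = l.filter p ++ l.filter (fun a => !p a)
  | [], _ => rfl
  | a :: l, h => by
    obtain ⟨ha, hl⟩ := pairwise_cons.mp h
    by_cases hpa : p a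
    · simpa [filter_cons, hpa] using eq_filter_append_filter_not_of_pairwise hl
    · have hl' : ∀ b ∈ l, ¬ p b := fun b hb => mt (ha b hb) hpa
      rw [filter_cons_of_neg hpa, filter_eq_nil_iff.mpr hl',
        filter_cons_of_pos (by simpa using hpa), filter_eq_self.mpr (by simpa using hl')]
      rfl

lemma List.pairwise_lt_of_nodup {α : Type*} [LinearOrder α] {l : List α} (hl : l.Nodup)
    (h : ∀ {a b}, [a, b] <+ l → ¬ b < a) : l.Pairwise (· < ·) :=
  pairwise_iff_forall_sublist.mpr fun hab =>
    lt_of_le_of_ne (not_lt.mp (h hab)) fun hba => nodup_iff_sublist.mp hl _ (hba ▸ hab)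

lemma seqContains_321_iff (l : List ℕ) :
    SeqContains l [3, 2, 1] ↔ ∃ a b c, [a, b, c] <+ l ∧ c < b ∧ b < a := by
  constructor
  · rintro ⟨γ, hs, hl, h⟩
    obtain ⟨a, b, c, rfl⟩ := List.length_eq_three.mp hl
    have h21 := h 2 1 (by simp) (by simp)
    have h10 := h 1 0 (by simp) (by simp)
    simp only [getD_cons_succ, getD_cons_zero] at h21 h10
    exact ⟨a, b, c, hs, by omega, by omega⟩
  · rintro ⟨a, b, c, hs, hcb, hba⟩
    refine ⟨[a, b, c], hs, rfl, fun i j hi hj => ?_⟩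
    simp only [length_cons, length_nil] at hi hj
    interval_cases i <;> interval_cases j <;> simp <;> omega

lemma seqContains_3124_iff (l : List ℕ) :
    SeqContains l [3, 1, 2, 4] ↔ ∃ a b c d, [a, b, c, d] <+ l ∧ b < c ∧ c < a ∧ a < d := by
  constructor
  · rintro ⟨γ, hs, hl, h⟩
    obtain ⟨a, b, c, d, rfl⟩ := List.length_eq_four.mp hl
    have h12 := h 1 2 (by simp) (by simp)
    have h20 := h 2 0 (by simp) (by simp)
    have h03 := h 0 3 (by simp) (by simp)
    simp only [getD_cons_succ, getD_cons_zero] at h12 h20 h03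
    exact ⟨a, b, c, d, hs, by omega, by omega, by omega⟩
  · rintro ⟨a, b, c, d, hs, hbc, hca, had⟩
    refine ⟨[a, b, c, d], hs, rfl, fun i j hi hj => ?_⟩
    simp only [length_cons, length_nil] at hi hj
    interval_cases i <;> interval_cases j <;> simp <;> omega

lemma getD_map_add {c i : ℕ} {l : List ℕ} (h : i < l.length) :
    (l.map (· + c)).getD i 0 = l.getD i 0 + c := by
  simp [getElem?_eq_getElem h]

lemma sameRelOrder_map_add_iff (c : ℕ) (γ p : List ℕ) :
    SameRelOrder (γ.map (· + c)) p ↔ SameRelOrder γ p := by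
  unfold SameRelOrder
  simp only [length_map]
  refine and_congr_right fun _ => forall₂_congr fun i j =>
    imp_congr_right fun hi => imp_congr_right fun hj => ?_
  rw [getD_map_add hi, getD_map_add hj, Nat.add_lt_add_iff_right]

lemma seqContains_map_add_iff (c : ℕ) (l p : List ℕ) :
    SeqContains (l.map (· + c)) p ↔ SeqContains l p := by
  constructor
  · rintro ⟨γ, hs, hr⟩
    obtain ⟨δ, hδ, rfl⟩ := sublist_map_iff.mp hs
    exact ⟨δ, hδ, (sameRelOrder_map_add_iff c δ p).mp hr⟩
  · rintro ⟨γ, hs, hr⟩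
    exact ⟨γ.map (· + c), hs.map _, (sameRelOrder_map_add_iff c γ p).mpr hr⟩

lemma hasFishburnCopy_map_add_iff (c : ℕ) (l : List ℕ) :
    HasFishburnCopy (l.map (· + c)) ↔ HasFishburnCopy l := by
  unfold HasFishburnCopy
  simp only [length_map]
  refine exists₂_congr fun j k => and_congr_right fun hjk => and_congr_right fun hk => ?_
  rw [getD_map_add (by omega), getD_map_add hk, getD_map_add (by omega)]
  omega

lemma hasFishburnCopy_cons_iff {x : ℕ} {u : List ℕ} (hx : ∀ y ∈ u.tail, y + 1 ≠ x) :
    HasFishburnCopy (x :: u) ↔ HasFishburnCopy u := by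
  constructor
  · rintro ⟨j, k, hjk, hk, heq, hlt⟩
    obtain ⟨k, rfl⟩ : ∃ k', k = k' + 1 := ⟨k - 1, by omega⟩
    cases j with
    | zero =>
      obtain ⟨a, u, rfl⟩ := exists_cons_of_length_pos (show 0 < u.length by simp at hk; omega)
      obtain ⟨k, rfl⟩ : ∃ k', k = k' + 1 := ⟨k - 1, by omega⟩
      simp only [length_cons, getD_cons_succ, getD_cons_zero] at hk heq
      have hk : k < u.length := by omega
      exact absurd heq.symm (hx _ (by simp [getElem?_eq_getElem hk]))
    | succ j =>
      simp only [length_cons, getD_cons_succ] at hk heq hlt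
      exact ⟨j, k, by omega, by omega, heq, hlt⟩
  · rintro ⟨j, k, hjk, hk, heq, hlt⟩
    exact ⟨j + 1, k + 1, by omega, by simpa using hk, by simpa using heq, by simpa using hlt⟩

lemma hasFishburnCopy_of_mem {x y b : ℕ} {t : List ℕ} (hb : b ∈ t) (hx : x = b + 1)
    (hxy : x < y) : HasFishburnCopy (x :: y :: t) := by
  obtain ⟨i, hi, rfl⟩ := mem_iff_getElem.mp hb
  exact ⟨0, i + 2, by omega, by simpa using hi, by simpa [getElem?_eq_getElem hi] using hx,
    by simpa using hxy⟩

-- In `321` and in `3124` the first letter exceeds two later ones, so `x` cannot take part.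
lemma seqContains_321_cons_iff {x : ℕ} {u : List ℕ}
    (hu : ∀ b ∈ u, ∀ c ∈ u, b < x → c < x → b = c) :
    SeqContains (x :: u) [3, 2, 1] ↔ SeqContains u [3, 2, 1] := by
  simp only [seqContains_321_iff]
  refine ⟨fun ⟨a, b, c, hs, hcb, hba⟩ => ?_, fun ⟨a, b, c, hs, h⟩ => ⟨a, b, c, hs.cons x, h⟩⟩
  rcases sublist_cons_iff.mp hs with hs | ⟨r, hr, hs⟩
  · exact ⟨a, b, c, hs, hcb, hba⟩
  · obtain ⟨rfl, rfl⟩ := cons_eq_cons.mp hr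
    have := hu b (hs.subset (by simp)) c (hs.subset (by simp)) hba (by omega)
    omega

lemma seqContains_3124_cons_iff {x : ℕ} {u : List ℕ}
    (hu : ∀ b ∈ u, ∀ c ∈ u, b < x → c < x → b = c) :
    SeqContains (x :: u) [3, 1, 2, 4] ↔ SeqContains u [3, 1, 2, 4] := by
  simp only [seqContains_3124_iff]
  refine ⟨fun ⟨a, b, c, d, hs, hbc, hca, had⟩ => ?_,
    fun ⟨a, b, c, d, hs, h⟩ => ⟨a, b, c, d, hs.cons x, h⟩⟩
  rcases sublist_cons_iff.mp hs with hs | ⟨r, hr, hs⟩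
  · exact ⟨a, b, c, d, hs, hbc, hca, had⟩
  · obtain ⟨rfl, rfl⟩ := cons_eq_cons.mp hr
    have := hu b (hs.subset (by simp)) c (hs.subset (by simp)) (by omega) hca
    omega

lemma isPermList_one_cons_map_iff {m : ℕ} {l : List ℕ} :
    IsPermList (m + 1) (1 :: l.map (· + 1)) ↔ IsPermList m l := by
  rw [IsPermList, IsPermList, range'_succ, ← range'_map_add, perm_cons,
    map_perm_map_iff (add_left_injective 1)]

lemma isPermList_two_one_cons_map_iff {m : ℕ} {l : List ℕ} :
    IsPermList (m + 2) (2 :: 1 :: l.map (· + 2)) ↔ IsPermList m l := by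
  have hrange : range' 1 (m + 2) = 1 :: 2 :: (range' 1 m).map (· + 2) := by
    simp [range'_map_add, range'_succ]
  have hswap := Perm.swap 1 2 (l.map (· + 2))
  rw [IsPermList, IsPermList, hrange]
  calc _ ↔ 1 :: 2 :: l.map (· + 2) ~ 1 :: 2 :: (range' 1 m).map (· + 2) :=
        ⟨hswap.symm.trans, hswap.trans⟩
    _ ↔ _ := by rw [perm_cons, perm_cons, map_perm_map_iff (add_left_injective 2)]

lemma IsPermList.mem_iff {n y : ℕ} {l : List ℕ} (h : IsPermList n l) :
    y ∈ l ↔ 1 ≤ y ∧ y ≤ n := by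
  rw [Perm.mem_iff h, mem_range'_1]
  omega

lemma IsPermList.nodup {n : ℕ} {l : List ℕ} (h : IsPermList n l) : l.Nodup :=
  Perm.nodup_iff h |>.mpr nodup_range'

def fishburn321_3124 (n : ℕ) : Set (List ℕ) := FishburnSet n [[3, 2, 1], [3, 1, 2, 4]]

lemma mem_fishburn321_3124_iff {n : ℕ} {l : List ℕ} : l ∈ fishburn321_3124 n ↔
    IsPermList n l ∧ ¬ HasFishburnCopy l ∧
      ¬ SeqContains l [3, 2, 1] ∧ ¬ SeqContains l [3, 1, 2, 4] := by
  simp [fishburn321_3124, FishburnSet, FishburnFree]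

lemma one_cons_map_mem_iff {m : ℕ} {l : List ℕ} :
    1 :: l.map (· + 1) ∈ fishburn321_3124 (m + 1) ↔ l ∈ fishburn321_3124 m := by
  have hu : ∀ b ∈ l.map (· + 1), ∀ c ∈ l.map (· + 1), b < 1 → c < 1 → b = c := by simp
  rw [mem_fishburn321_3124_iff, mem_fishburn321_3124_iff, isPermList_one_cons_map_iff,
    hasFishburnCopy_cons_iff fun y hy => ?_, seqContains_321_cons_iff hu,
    seqContains_3124_cons_iff hu, hasFishburnCopy_map_add_iff, seqContains_map_add_iff,
    seqContains_map_add_iff]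
  obtain ⟨z, -, rfl⟩ := mem_map.mp (mem_of_mem_tail hy)
  omega

lemma two_one_cons_map_mem_iff {m : ℕ} {l : List ℕ} :
    2 :: 1 :: l.map (· + 2) ∈ fishburn321_3124 (m + 2) ↔ l ∈ fishburn321_3124 m := by
  have hu₁ : ∀ b ∈ l.map (· + 2), ∀ c ∈ l.map (· + 2), b < 1 → c < 1 → b = c := by simp
  have hu₂ : ∀ b ∈ 1 :: l.map (· + 2), ∀ c ∈ 1 :: l.map (· + 2), b < 2 → c < 2 → b = c := by
    simp only [mem_cons, mem_map]
    rintro b (rfl | ⟨b, -, rfl⟩) c (rfl | ⟨c, -, rfl⟩) <;> omega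
  rw [mem_fishburn321_3124_iff, mem_fishburn321_3124_iff, isPermList_two_one_cons_map_iff,
    hasFishburnCopy_cons_iff (by simp), hasFishburnCopy_cons_iff fun y hy => ?_,
    seqContains_321_cons_iff hu₂, seqContains_321_cons_iff hu₁,
    seqContains_3124_cons_iff hu₂, seqContains_3124_cons_iff hu₁,
    hasFishburnCopy_map_add_iff, seqContains_map_add_iff, seqContains_map_add_iff]
  obtain ⟨z, -, rfl⟩ := mem_map.mp (mem_of_mem_tail hy)
  omega

def rigidTail (x n : ℕ) : List ℕ := range' (x + 1) (n - x) ++ range' 2 (x - 2)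

lemma two_le_and_ne_of_mem_rigidTail {x n y : ℕ} (hx : 1 ≤ x) (h : y ∈ rigidTail x n) :
    2 ≤ y ∧ y ≠ x := by
  rcases mem_append.mp h with h | h <;> have := mem_range'_1.mp h <;> omega

lemma cons_one_rigidTail_perm {x n : ℕ} (hx : 2 ≤ x) (hxn : x ≤ n) :
    x :: 1 :: rigidTail x n ~ range' 1 n := by
  obtain ⟨n, rfl⟩ : ∃ n', n = n' + 1 := ⟨n - 1, by omega⟩
  have hsplit : range' 2 n = range' 2 (x - 2) ++ x :: range' (x + 1) (n + 1 - x) := by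
    have h := range'_append (s := 2) (m := x - 2) (n := n + 1 - x + 1) (step := 1)
    rw [show 2 + 1 * (x - 2) = x by omega, show x - 2 + (n + 1 - x + 1) = n by omega] at h
    rw [← h, range'_succ]
  rw [range'_succ, hsplit, rigidTail]
  exact (Perm.swap 1 x _).trans ((perm_append_comm.cons x).trans perm_middle.symm |>.cons 1)

lemma length_rigidTail {x n : ℕ} (hx : 2 ≤ x) (hxn : x ≤ n) : (rigidTail x n).length = n - 2 := by
  simp only [rigidTail, length_append, length_range']
  omega

lemma getD_rigidTail {x n i : ℕ} (hx : 2 ≤ x) (hxn : x ≤ n) (hi : i < n - 2) :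
    (rigidTail x n).getD i 0 = if i < n - x then x + 1 + i else 2 + (i - (n - x)) := by
  have hi' : i < (rigidTail x n).length := by rw [length_rigidTail hx hxn]; exact hi
  unfold rigidTail at hi' ⊢
  rw [getD_eq_getElem _ _ hi', getElem_append]
  simp only [length_range', getElem_range'_1]
  split_ifs <;> omega

lemma pairwise_rigidTail (x n : ℕ) : (rigidTail x n).Pairwise
    fun p q => (p < q ∨ x < p ∧ q < x) ∧ ¬(p < x ∧ x < q) := by
  refine pairwise_append.mpr ⟨(pairwise_lt_range').imp_of_mem ?_,
    (pairwise_lt_range').imp_of_mem ?_, fun p hp q hq => ?_⟩ <;>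
    simp only [mem_range'_1] at * <;> omega

lemma not_hasFishburnCopy_cons_one_rigidTail {x n : ℕ} (hx : 3 ≤ x) (hxn : x ≤ n) :
    ¬ HasFishburnCopy (x :: 1 :: rigidTail x n) := by
  rintro ⟨j, k, hjk, hk, heq, hlt⟩
  simp only [length_cons, length_rigidTail (by omega) hxn] at hk
  obtain ⟨k, rfl⟩ : ∃ k', k = k' + 2 := ⟨k - 2, by omega⟩
  simp only [getD_cons_succ, getD_rigidTail (by omega) hxn (show k < n - 2 by omega)] at heq
  match j with
  | 0 => simp only [getD_cons_succ, getD_cons_zero] at hlt; omega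
  | 1 => simp only [getD_cons_succ, getD_cons_zero] at heq; split_ifs at heq <;> omega
  | j + 2 =>
    simp only [getD_cons_succ, getD_rigidTail (by omega) hxn (show j < n - 2 by omega),
      getD_rigidTail (by omega) hxn (show j + 1 < n - 2 by omega)] at heq hlt
    split_ifs at heq hlt <;> omega

lemma rel_of_pair_sublist_rigidTail {x n p q : ℕ} (h : [p, q] <+ rigidTail x n) :
    (p < q ∨ x < p ∧ q < x) ∧ ¬(p < x ∧ x < q) :=
  pairwise_iff_forall_sublist.mp (pairwise_rigidTail x n) h

lemma not_seqContains_321_cons_one_rigidTail {x n : ℕ} (hx : 3 ≤ x) :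
    ¬ SeqContains (x :: 1 :: rigidTail x n) [3, 2, 1] := by
  rw [seqContains_321_iff]
  rintro ⟨a, b, c, hs, hcb, hba⟩
  rcases sublist_cons_iff.mp hs with hs | ⟨r, hr, hs⟩
  · rcases sublist_cons_iff.mp hs with hs | ⟨r, hr, hs⟩
    · have hab := rel_of_pair_sublist_rigidTail ((by simp : [a, b] <+ [a, b, c]).trans hs)
      have hbc := rel_of_pair_sublist_rigidTail ((by simp : [b, c] <+ [a, b, c]).trans hs)
      omega
    · obtain ⟨rfl, rfl⟩ := cons_eq_cons.mp hr
      omega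
  · obtain ⟨rfl, rfl⟩ := cons_eq_cons.mp hr
    rcases sublist_cons_iff.mp hs with hs | ⟨r, hr, hs⟩
    · have := rel_of_pair_sublist_rigidTail hs
      omega
    · obtain ⟨rfl, rfl⟩ := cons_eq_cons.mp hr
      have := two_le_and_ne_of_mem_rigidTail (by omega) (hs.subset (mem_singleton_self c))
      omega

lemma not_seqContains_3124_cons_one_rigidTail {x n : ℕ} (hx : 3 ≤ x) :
    ¬ SeqContains (x :: 1 :: rigidTail x n) [3, 1, 2, 4] := by
  rw [seqContains_3124_iff]
  rintro ⟨a, b, c, d, hs, hbc, hca, had⟩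
  rcases sublist_cons_iff.mp hs with hs | ⟨r, hr, hs⟩
  · rcases sublist_cons_iff.mp hs with hs | ⟨r, hr, hs⟩
    · have hab := rel_of_pair_sublist_rigidTail ((by simp : [a, b] <+ [a, b, c, d]).trans hs)
      have hac := rel_of_pair_sublist_rigidTail ((by simp : [a, c] <+ [a, b, c, d]).trans hs)
      have hcd := rel_of_pair_sublist_rigidTail ((by simp : [c, d] <+ [a, b, c, d]).trans hs)
      omega
    · obtain ⟨rfl, rfl⟩ := cons_eq_cons.mp hr
      omega
  · obtain ⟨rfl, rfl⟩ := cons_eq_cons.mp hr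
    have hcd : [c, d] <+ rigidTail a n := by
      rcases sublist_cons_iff.mp hs with hs | ⟨r, hr, hs⟩
      · exact (by simp : [c, d] <+ [b, c, d]).trans hs
      · obtain ⟨rfl, rfl⟩ := cons_eq_cons.mp hr
        exact hs
    have := rel_of_pair_sublist_rigidTail hcd
    omega

lemma cons_one_rigidTail_mem {x n : ℕ} (hx : 3 ≤ x) (hxn : x ≤ n) :
    x :: 1 :: rigidTail x n ∈ fishburn321_3124 n :=
  mem_fishburn321_3124_iff.mpr ⟨cons_one_rigidTail_perm (by omega) hxn,
    not_hasFishburnCopy_cons_one_rigidTail hx hxn, not_seqContains_321_cons_one_rigidTail hx,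
    not_seqContains_3124_cons_one_rigidTail hx⟩

lemma eq_one_of_cons_cons_mem {n x y : ℕ} {t : List ℕ} (hπ : x :: y :: t ∈ fishburn321_3124 n)
    (hx : x ≠ 1) : y = 1 := by
  obtain ⟨hperm, hfish, h321, -⟩ := mem_fishburn321_3124_iff.mp hπ
  have hmem := fun z => hperm.mem_iff (y := z)
  have hnd := hperm.nodup
  simp only [nodup_cons, mem_cons, not_or] at hnd
  by_contra hy
  have hx₀ := (hmem x).mp (by simp)
  have hy₀ := (hmem y).mp (by simp)
  rcases lt_or_gt_of_ne hnd.1.1 with hxy | hxy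
  · have hpred : x - 1 ∈ t := by
      have := (hmem (x - 1)).mpr ⟨by omega, by omega⟩
      simpa [show x - 1 ≠ x by omega, show x - 1 ≠ y by omega] using this
    exact hfish (hasFishburnCopy_of_mem hpred (by omega) hxy)
  · have h1 : 1 ∈ t := by
      have := (hmem 1).mpr ⟨le_rfl, by omega⟩
      simpa [Ne.symm hx, Ne.symm hy] using this
    exact h321 ((seqContains_321_iff _).mpr ⟨x, y, 1, by simpa using h1, by omega, hxy⟩)

lemma filter_lt_rigidTail (x n : ℕ) :
    (rigidTail x n).filter (x < ·) = range' (x + 1) (n - x) := by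
  rw [rigidTail, filter_append, filter_eq_self.mpr, filter_eq_nil_iff.mpr, append_nil] <;>
    simp only [mem_range'_1, decide_eq_true_eq] <;> omega

lemma filter_le_rigidTail (x n : ℕ) : (rigidTail x n).filter (· ≤ x) = range' 2 (x - 2) := by
  rw [rigidTail, filter_append, filter_eq_nil_iff.mpr, filter_eq_self.mpr, nil_append] <;>
    simp only [mem_range'_1, decide_eq_true_eq] <;> omega

section RigidStructure

variable {n x : ℕ} {t : List ℕ}

lemma perm_rigidTail_of_mem (hx : 2 ≤ x) (hπ : x :: 1 :: t ∈ fishburn321_3124 n) :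
    t ~ rigidTail x n := by
  have hperm := (mem_fishburn321_3124_iff.mp hπ).1
  have hxn : x ≤ n := (hperm.mem_iff.mp (mem_cons_self ..)).2
  exact (perm_cons _).mp <| (perm_cons _).mp <|
    hperm.trans (cons_one_rigidTail_perm hx hxn).symm

lemma eq_filter_append_filter_of_mem (hx : 2 ≤ x) (hπ : x :: 1 :: t ∈ fishburn321_3124 n) :
    t = t.filter (x < ·) ++ t.filter (· ≤ x) := by
  have h3124 := (mem_fishburn321_3124_iff.mp hπ).2.2.2
  have ht := perm_rigidTail_of_mem hx hπ
  have hsplit := eq_filter_append_filter_not_of_pairwise (p := (x < ·)) (l := t) <|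
    pairwise_iff_forall_sublist.mpr fun {a b} hab hb => by
      have ha := two_le_and_ne_of_mem_rigidTail (by omega)
        (ht.subset (hab.subset (mem_cons_self ..)))
      by_contra hxa
      simp only [decide_eq_true_eq] at hb hxa
      exact h3124 <| (seqContains_3124_iff _).mpr
        ⟨x, 1, a, b, (hab.cons_cons 1).cons_cons x, by omega, by omega, hb⟩
  simpa only [← decide_not, not_lt] using hsplit

lemma filter_le_eq_of_mem (hx : 2 ≤ x) (hπ : x :: 1 :: t ∈ fishburn321_3124 n) :
    t.filter (· ≤ x) = range' 2 (x - 2) := by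
  obtain ⟨hperm, -, h321, -⟩ := mem_fishburn321_3124_iff.mp hπ
  have ht := perm_rigidTail_of_mem hx hπ
  refine Perm.eq_of_pairwise' (r := (· < ·)) ?_ pairwise_lt_range' ?_
  · have hnd : t.Nodup := hperm.nodup.sublist (by simp)
    refine pairwise_lt_of_nodup (hnd.filter _) fun {a b} hab hba => h321 ?_
    have ha : a ≤ x := by simpa using of_mem_filter (hab.subset (mem_cons_self ..))
    have hax : a ≠ x := (two_le_and_ne_of_mem_rigidTail (by omega)
      (ht.subset (mem_of_mem_filter (hab.subset (mem_cons_self ..))))).2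
    exact (seqContains_321_iff _).mpr
      ⟨x, a, b, ((hab.trans filter_sublist).cons 1).cons_cons x, hba, by omega⟩
  · simpa only [filter_le_rigidTail] using ht.filter (· ≤ x)

lemma filter_lt_eq_of_mem (hx : 3 ≤ x) (hπ : x :: 1 :: t ∈ fishburn321_3124 n) :
    t.filter (x < ·) = range' (x + 1) (n - x) := by
  obtain ⟨hperm, -, h321, -⟩ := mem_fishburn321_3124_iff.mp hπ
  have ht := perm_rigidTail_of_mem (by omega) hπ
  refine Perm.eq_of_pairwise' (r := (· < ·)) ?_ pairwise_lt_range' ?_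
  · have hnd : t.Nodup := hperm.nodup.sublist (by simp)
    refine pairwise_lt_of_nodup (hnd.filter _) fun {a b} hab hba => h321 ?_
    have hb : x < b := by simpa using of_mem_filter (hab.subset (by simp))
    have h2 : 2 ∈ t.filter (· ≤ x) := by
      rw [filter_le_eq_of_mem (by omega) hπ, mem_range'_1]
      omega
    -- `2` lies below `x`, hence after every entry above `x`
    have hab2 : [a, b, 2] <+ t := by
      rw [eq_filter_append_filter_of_mem (by omega) hπ]
      exact hab.append (singleton_sublist.mpr h2)
    exact (seqContains_321_iff _).mpr ⟨a, b, 2, (hab2.cons 1).cons x, by omega, hba⟩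
  · simpa only [filter_lt_rigidTail] using ht.filter (x < ·)

lemma eq_rigidTail_of_mem (hx : 3 ≤ x) (hπ : x :: 1 :: t ∈ fishburn321_3124 n) :
    t = rigidTail x n := by
  rw [eq_filter_append_filter_of_mem (by omega) hπ, filter_lt_eq_of_mem hx hπ,
    filter_le_eq_of_mem (by omega) hπ, rigidTail]

end RigidStructure

lemma fishburn321_3124_add_two (m : ℕ) : fishburn321_3124 (m + 2) =
    (fun l => 1 :: l.map (· + 1)) '' fishburn321_3124 (m + 1) ∪
      (fun l => 2 :: 1 :: l.map (· + 2)) '' fishburn321_3124 m ∪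
      (fun x => x :: 1 :: rigidTail x (m + 2)) '' Set.Icc 3 (m + 2) := by
  ext π
  constructor
  · intro hπ
    have hperm := (mem_fishburn321_3124_iff.mp hπ).1
    obtain ⟨x, y, t, rfl⟩ : ∃ x y t, π = x :: y :: t := by
      match π, hperm.length_eq with
      | x :: y :: t, _ => exact ⟨x, y, t, rfl⟩
    have hmem := fun z => hperm.mem_iff (y := z)
    rcases eq_or_ne x 1 with rfl | hx
    · have hyt := map_sub_map_add fun z hz => ((hmem z).mp (mem_cons_of_mem 1 hz)).1
      exact .inl (.inl ⟨(y :: t).map (· - 1), one_cons_map_mem_iff.mp (by rwa [hyt]),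
        by beta_reduce; rw [hyt]⟩)
    obtain rfl := eq_one_of_cons_cons_mem hπ hx
    rcases eq_or_ne x 2 with rfl | hx₂
    · have h1 : 1 ∉ t := (nodup_cons.mp (nodup_cons.mp hperm.nodup).2).1
      have ht : ∀ z ∈ t, 2 ≤ z := fun z hz => by
        have := (hmem z).mp (by simp [hz])
        have : z ≠ 1 := by rintro rfl; exact h1 hz
        omega
      exact .inl (.inr ⟨t.map (· - 2),
        two_one_cons_map_mem_iff.mp (by rwa [map_sub_map_add ht]),
        by beta_reduce; rw [map_sub_map_add ht]⟩)
    · have hxn := (hmem x).mp (mem_cons_self ..)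
      exact .inr ⟨x, ⟨by omega, hxn.2⟩, by rw [eq_rigidTail_of_mem (by omega) hπ]⟩
  · rintro ((⟨l, hl, rfl⟩ | ⟨l, hl, rfl⟩) | ⟨x, ⟨hx, hxn⟩, rfl⟩)
    · exact one_cons_map_mem_iff.mpr hl
    · exact two_one_cons_map_mem_iff.mpr hl
    · exact cons_one_rigidTail_mem hx hxn

lemma finite_fishburn321_3124 (n : ℕ) : (fishburn321_3124 n).Finite :=
  (range' 1 n).permutations.finite_toSet.subset fun _ hl =>
    mem_permutations.mpr (mem_fishburn321_3124_iff.mp hl).1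

lemma ncard_fishburn321_3124_add_two (m : ℕ) : (fishburn321_3124 (m + 2)).ncard =
    (fishburn321_3124 (m + 1)).ncard + (fishburn321_3124 m).ncard + m := by
  have hinj₁ : Function.Injective fun l : List ℕ => 1 :: l.map (· + 1) := fun _ _ h =>
    (map_injective_iff.mpr (add_left_injective 1)) (cons_eq_cons.mp h).2
  have hinj₂ : Function.Injective fun l : List ℕ => 2 :: 1 :: l.map (· + 2) := fun _ _ h =>
    (map_injective_iff.mpr (add_left_injective 2)) (by simpa using h)
  have hinj₃ : Function.Injective fun x => x :: 1 :: rigidTail x (m + 2) := fun _ _ h =>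
    (cons_eq_cons.mp h).1
  have hfin₁ := (finite_fishburn321_3124 (m + 1)).image fun l => 1 :: l.map (· + 1)
  have hfin₂ := (finite_fishburn321_3124 m).image fun l => 2 :: 1 :: l.map (· + 2)
  rw [fishburn321_3124_add_two, Set.ncard_union_eq ?disj₃ (hfin₁.union hfin₂),
    Set.ncard_union_eq ?disj₁₂ hfin₁ hfin₂, Set.ncard_image_of_injective _ hinj₁,
    Set.ncard_image_of_injective _ hinj₂, Set.ncard_image_of_injective _ hinj₃,
    Set.ncard_Icc_nat]
  · omega
  case disj₁₂ => simp [Set.disjoint_left]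
  case disj₃ =>
    simp only [Set.disjoint_left, Set.mem_union, Set.mem_image, Set.mem_Icc]
    rintro _ (⟨l, -, rfl⟩ | ⟨l, -, rfl⟩) ⟨x, ⟨hx, -⟩, h⟩ <;> simp only [cons.injEq] at h <;> omega

lemma mem_fishburn321_3124_of_le_two {n : ℕ} {l : List ℕ} (hl : IsPermList n l) (hn : n ≤ 2) :
    l ∈ fishburn321_3124 n := by
  have hlen : l.length = n := by rw [hl.length_eq, length_range']
  refine mem_fishburn321_3124_iff.mpr ⟨hl, fun ⟨j, k, hjk, hk, _⟩ => by omega, ?_, ?_⟩ <;>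
    exact fun ⟨γ, hs, hγ, _⟩ => by have := hs.length_le; simp at hγ; omega

lemma fishburn321_3124_zero : fishburn321_3124 0 = {[]} :=
  Set.ext fun _ => ⟨fun h => perm_nil.mp (mem_fishburn321_3124_iff.mp h).1,
    fun h => mem_fishburn321_3124_of_le_two (h ▸ Perm.refl _) (by omega)⟩

lemma fishburn321_3124_one : fishburn321_3124 1 = {[1]} :=
  Set.ext fun _ => ⟨fun h => perm_singleton.mp (mem_fishburn321_3124_iff.mp h).1,
    fun h => mem_fishburn321_3124_of_le_two (h ▸ Perm.refl _) (by omega)⟩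

lemma add_add_one_eq_paperFib_of_rec {a : ℕ → ℕ} (h₀ : a 0 = 1) (h₁ : a 1 = 1)
    (h : ∀ m, a (m + 2) = a (m + 1) + a m + m) : ∀ n, a n + n + 1 = paperFib (n + 2)
  | 0 => by simp [h₀, paperFib]
  | 1 => by simp [h₁, paperFib]
  | m + 2 => by
    have ih₀ := add_add_one_eq_paperFib_of_rec h₀ h₁ h m
    have ih₁ : a (m + 1) + (m + 1) + 1 = paperFib (m + 3) :=
      add_add_one_eq_paperFib_of_rec h₀ h₁ h (m + 1)
    rw [h, show paperFib (m + 2 + 2) = paperFib (m + 3) + paperFib (m + 2) from rfl]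
    omega

/-- For all `n ≥ 0`, `|F_n(321, 3124)| = F_{n+2} - n - 1`, where `F` denotes the
Fibonacci numbers with `F_0 = F_1 = 1`. -/
theorem stmt16 (n : ℕ) :
    (FishburnSet n [[3, 2, 1], [3, 1, 2, 4]]).ncard = paperFib (n + 2) - n - 1 := by
  have := add_add_one_eq_paperFib_of_rec (a := fun n => (fishburn321_3124 n).ncard)
    (by simp [fishburn321_3124_zero]) (by simp [fishburn321_3124_one])
    ncard_fishburn321_3124_add_two n
  simp only [fishburn321_3124] at this
  omega
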